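/- arXiv:2503.03083 — 2 statements merged into one kernel-verified Lean document; each statement's English description precedes it below -/
import Mathlib

section
/- Let n ≥ 7 and 1 < k < n/2 be integers, let d be the largest integer such that 1 + kd ≤ n, and suppose d = k. Then the set {1, 1+(k-2)d, 1+(k-1)(d-1)} is a minimal non-face of the van der Waerden complex vdW(n,k): it is not a face of vdW(n,k), but every proper subset of it is a face. -/
/-- `F` is a face of the van der Waerden complex `vdW(n,k)`: `F` is contained in a
full arithmetic progression `{a, a+j, ..., a+kj}` with `a ≥ 1`, `j ≥ 1`, `a + kj ≤ n`. -/
def vdwFace (n k : ℕ) (F : Finset ℕ) : Prop :=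
  ∃ a j : ℕ, 1 ≤ a ∧ 1 ≤ j ∧ a + k * j ≤ n ∧
    F ⊆ (Finset.range (k + 1)).image (fun i => a + i * j)

/-- A facet of `vdW(n,k)` is a face that is maximal under inclusion. -/
def vdwFacet (n k : ℕ) (F : Finset ℕ) : Prop :=
  vdwFace n k F ∧ ∀ G : Finset ℕ, vdwFace n k G → F ⊆ G → F = G

/-- `S` is a minimal non-face of `vdW(n,k)`: a subset of the vertex set `{1,...,n}`
that is not a face, but all of whose proper subsets are faces. -/
def vdwMinNonFace (n k : ℕ) (S : Finset ℕ) : Prop :=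
  S ⊆ Finset.Icc 1 n ∧ ¬ vdwFace n k S ∧ ∀ T : Finset ℕ, T ⊂ S → vdwFace n k T

lemma vdwFace_subset' {n k : ℕ} {F G : Finset ℕ} (h : vdwFace n k G) (hs : F ⊆ G) :
    vdwFace n k F := by
  obtain ⟨a, j, h1, h2, h3, h4⟩ := h
  exact ⟨a, j, h1, h2, h3, hs.trans h4⟩

/-- For `n ≥ 7`, `1 < k < n/2`, `d` the largest integer with `1 + kd ≤ n`, and `d = k`,
the set `{1, 1+(k-2)d, 1+(k-1)(d-1)}` is a minimal non-face of `vdW(n,k)`. -/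
theorem vdW_minimal_nonface_d_eq_k (n k d : ℕ) (hn : 7 ≤ n) (hk : 1 < k) (hkn : 2 * k < n)
    (hd : 1 + k * d ≤ n ∧ ∀ e : ℕ, 1 + k * e ≤ n → e ≤ d) (hdk : d = k) :
    vdwMinNonFace n k {1, 1 + (k - 2) * d, 1 + (k - 1) * (d - 1)} := by
  subst hdk
  obtain ⟨hd1, hd2⟩ := hd
  have hub : n ≤ d * d + d := by
    by_contra h
    push_neg at h
    have h2 := hd2 (d + 1) (by nlinarith)
    omega
  have hk3 : 3 ≤ d := by
    by_contra h
    push_neg at h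
    have hd2' : d = 2 := by omega
    subst hd2'
    norm_num at hub
    omega
  obtain ⟨c, rfl⟩ : ∃ c, d = c + 3 := ⟨d - 3, by omega⟩
  have hn1 : c * c + 6 * c + 10 ≤ n := by nlinarith
  have e1 : 1 + (c + 3 - 2) * (c + 3) = c * c + 4 * c + 4 := by
    have h : c + 3 - 2 = c + 1 := by omega
    rw [h]; ring
  have e2 : 1 + (c + 3 - 1) * (c + 3 - 1) = c * c + 4 * c + 5 := by
    have h : c + 3 - 1 = c + 2 := by omega
    rw [h]; ring
  rw [e1, e2]
  refine ⟨?_, ?_, ?_⟩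
  · -- subset of Icc 1 n
    intro x hx
    simp only [Finset.mem_insert, Finset.mem_singleton] at hx
    simp only [Finset.mem_Icc]
    rcases hx with rfl | rfl | rfl
    · omega
    · exact ⟨by linarith [Nat.zero_le (c * c)], by linarith⟩
    · exact ⟨by linarith [Nat.zero_le (c * c)], by linarith⟩
  · -- not a face
    rintro ⟨a, j, ha, hj, hle, hsub⟩
    have m1 := hsub (show (1 : ℕ) ∈ _ by simp)
    have m2 := hsub (show (c * c + 4 * c + 4 : ℕ) ∈ _ by simp)
    have m3 := hsub (show (c * c + 4 * c + 5 : ℕ) ∈ _ by simp)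
    simp only [Finset.mem_image, Finset.mem_range] at m1 m2 m3
    obtain ⟨i1, hi1, f1⟩ := m1
    obtain ⟨i2, hi2, f2⟩ := m2
    obtain ⟨i3, hi3, f3⟩ := m3
    have ha1 : a = 1 := by
      have h := Nat.le_add_right a (i1 * j)
      linarith
    subst ha1
    have hlt : i2 < i3 := by
      by_contra h
      push_neg at h
      have h2 := Nat.mul_le_mul_right j h
      linarith
    obtain ⟨t, rfl⟩ : ∃ t, i3 = i2 + t + 1 := ⟨i3 - i2 - 1, by omega⟩
    have expand : (i2 + t + 1) * j = i2 * j + t * j + j := by ring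
    rw [expand] at f3
    have hj1 : j = 1 := by linarith [Nat.zero_le (t * j)]
    subst hj1
    simp only [mul_one] at f2 f3
    linarith [Nat.zero_le (c * c)]
  · -- all proper subsets are faces
    have face1 : vdwFace n (c + 3) {1, c * c + 4 * c + 4} := by
      refine ⟨1, c + 1, le_refl 1, by omega, by nlinarith, ?_⟩
      intro y hy
      simp only [Finset.mem_insert, Finset.mem_singleton] at hy
      simp only [Finset.mem_image, Finset.mem_range]
      rcases hy with rfl | rfl
      · exact ⟨0, by omega, by simp⟩
      · exact ⟨c + 3, by omega, by ring⟩
    have face2 : vdwFace n (c + 3) {1, c * c + 4 * c + 5} := by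
      refine ⟨1, c + 2, le_refl 1, by omega, by nlinarith, ?_⟩
      intro y hy
      simp only [Finset.mem_insert, Finset.mem_singleton] at hy
      simp only [Finset.mem_image, Finset.mem_range]
      rcases hy with rfl | rfl
      · exact ⟨0, by omega, by simp⟩
      · exact ⟨c + 2, by omega, by ring⟩
    have face3 : vdwFace n (c + 3) {c * c + 4 * c + 4, c * c + 4 * c + 5} := by
      refine ⟨c * c + 4 * c + 4, 1, by linarith [Nat.zero_le (c * c)], le_refl 1,
        by linarith, ?_⟩
      intro y hy
      simp only [Finset.mem_insert, Finset.mem_singleton] at hy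
      simp only [Finset.mem_image, Finset.mem_range]
      rcases hy with rfl | rfl
      · exact ⟨0, by omega, by ring⟩
      · exact ⟨1, by omega, by ring⟩
    intro T hT
    obtain ⟨x, hxS, hxT⟩ := Finset.exists_of_ssubset hT
    have hTS := hT.subset
    simp only [Finset.mem_insert, Finset.mem_singleton] at hxS
    rcases hxS with rfl | rfl | rfl
    · refine vdwFace_subset' face3 ?_
      intro y hy
      have hys := hTS hy
      simp only [Finset.mem_insert, Finset.mem_singleton] at hys ⊢
      rcases hys with rfl | h | h
      · exact absurd hy hxT
      · tauto
      · tauto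
    · refine vdwFace_subset' face2 ?_
      intro y hy
      have hys := hTS hy
      simp only [Finset.mem_insert, Finset.mem_singleton] at hys ⊢
      rcases hys with h | rfl | h
      · tauto
      · exact absurd hy hxT
      · tauto
    · refine vdwFace_subset' face1 ?_
      intro y hy
      have hys := hTS hy
      simp only [Finset.mem_insert, Finset.mem_singleton] at hys ⊢
      rcases hys with h | h | rfl
      · tauto
      · tauto
      · exact absurd hy hxT
end

section
/- Let n ≥ 7 and 1 < k < n/2 be integers. Then the van der Waerden complex vdW(n,k) has a minimal non-face of cardinality 2 and also a minimal non-face of cardinality 3. (Equivalently, the Stanley–Reisner ideal of vdW(n,k) has minimal generators of degree two and of degree three.) -/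
lemma vdwFace_of (n k a j : ℕ) (ha : 1 ≤ a) (hj : 1 ≤ j) (hn : a + k * j ≤ n)
    (F : Finset ℕ) (hF : ∀ x ∈ F, ∃ i, i ≤ k ∧ x = a + i * j) : vdwFace n k F := by
  refine ⟨a, j, ha, hj, hn, fun x hx => ?_⟩
  obtain ⟨i, hik, rfl⟩ := hF x hx
  exact Finset.mem_image.mpr ⟨i, Finset.mem_range.mpr (Nat.lt_succ_of_le hik), rfl⟩

lemma vdwFace_mono {n k : ℕ} {F G : Finset ℕ} (h : F ⊆ G) (hG : vdwFace n k G) :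
    vdwFace n k F := by
  obtain ⟨a, j, ha, hj, hn, hsub⟩ := hG
  exact ⟨a, j, ha, hj, hn, h.trans hsub⟩

lemma vdwFace_elim {n k : ℕ} {F : Finset ℕ} (h : vdwFace n k F) :
    ∃ a j : ℕ, 1 ≤ a ∧ 1 ≤ j ∧ a + k * j ≤ n ∧
      ∀ x ∈ F, ∃ i, i ≤ k ∧ x = a + i * j := by
  obtain ⟨a, j, ha, hj, hn, hsub⟩ := h
  refine ⟨a, j, ha, hj, hn, fun x hx => ?_⟩
  obtain ⟨i, hi, hxi⟩ := Finset.mem_image.mp (hsub hx)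
  exact ⟨i, Nat.lt_succ_iff.mp (Finset.mem_range.mp hi), hxi.symm⟩

lemma minNonFace_of (n k : ℕ) (S : Finset ℕ) (hS : S ⊆ Finset.Icc 1 n)
    (hnf : ¬ vdwFace n k S) (h : ∀ x ∈ S, vdwFace n k (S.erase x)) :
    vdwMinNonFace n k S := by
  refine ⟨hS, hnf, fun T hT => ?_⟩
  obtain ⟨x, hxS, hxT⟩ := Finset.exists_of_ssubset hT
  exact vdwFace_mono (Finset.subset_erase.mpr ⟨hT.subset, hxT⟩) (h x hxS)

lemma singleton_face (n k v : ℕ) (hk : 1 ≤ k) (hv1 : 1 ≤ v) (hvn : v ≤ n) (hn : k < n) :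
    vdwFace n k {v} := by
  rcases le_or_gt v k with h | h
  · refine vdwFace_of n k 1 1 le_rfl le_rfl (by omega) _ ?_
    intro x hx
    simp only [Finset.mem_singleton] at hx
    exact ⟨v - 1, by omega, by omega⟩
  · refine vdwFace_of n k (v - k) 1 (by omega) le_rfl (by omega) _ ?_
    intro x hx
    simp only [Finset.mem_singleton] at hx
    exact ⟨k, le_rfl, by omega⟩

lemma pair_min_of (n k u v : ℕ) (hu1 : 1 ≤ u) (huv : u < v) (hvn : v ≤ n) (hk : 1 ≤ k)
    (hkn : k < n) (hnf : ¬ vdwFace n k {u, v}) :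
    vdwMinNonFace n k {u, v} ∧ ({u, v} : Finset ℕ).card = 2 := by
  refine ⟨minNonFace_of n k _ ?_ hnf ?_, Finset.card_pair (by omega)⟩
  · intro x hx
    simp only [Finset.mem_insert, Finset.mem_singleton] at hx
    simp only [Finset.mem_Icc]
    rcases hx with rfl | rfl <;> omega
  · intro x hx
    simp only [Finset.mem_insert, Finset.mem_singleton] at hx
    rcases hx with rfl | rfl
    · refine vdwFace_mono (show ({x, v} : Finset ℕ).erase x ⊆ {v} from ?_)
        (singleton_face n k v hk (by omega) hvn hkn)
      intro y hy
      simp only [Finset.mem_erase, Finset.mem_insert, Finset.mem_singleton] at hy ⊢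
      tauto
    · refine vdwFace_mono (show ({u, x} : Finset ℕ).erase x ⊆ {u} from ?_)
        (singleton_face n k u hk hu1 (by omega) hkn)
      intro y hy
      simp only [Finset.mem_erase, Finset.mem_insert, Finset.mem_singleton] at hy ⊢
      tauto

lemma pair_deg2 (n k : ℕ) (hn : 7 ≤ n) (hk : 1 < k) (hkn : 2 * k < n) :
    ∃ S : Finset ℕ, vdwMinNonFace n k S ∧ S.card = 2 := by
  by_cases hdvd : k ∣ n - 1
  · -- use {2, n}
    refine ⟨{2, n}, pair_min_of n k 2 n (by omega) (by omega) le_rfl (by omega) (by omega) ?_⟩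
    rintro hf
    obtain ⟨a, j, ha, hj, hle, hmem⟩ := vdwFace_elim hf
    obtain ⟨i1, hi1, h1⟩ := hmem 2 (by simp)
    obtain ⟨i2, hi2, h2⟩ := hmem n (by simp)
    obtain ⟨d, hd⟩ := hdvd
    rcases (show a = 1 ∧ i1 * j = 1 ∨ a = 2 ∧ i1 * j = 0 by omega) with ⟨rfl, hij⟩ | ⟨rfl, hij⟩
    · have hj1 : j = 1 := Nat.dvd_one.mp (hij ▸ dvd_mul_left j i1)
      subst hj1
      have h2' : n = 1 + i2 * 1 := h2
      omega
    · have hki2 : k ≤ i2 := by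
        by_contra hc
        have hlt : i2 * j < k * j :=
          mul_lt_mul_of_pos_right (show i2 < k by omega) (show (0:ℕ) < j by omega)
        omega
      have hi2k : i2 = k := le_antisymm hi2 hki2
      rw [hi2k] at h2
      have h1' : k * d = k * j + 1 := by omega
      have h2' : k ∣ 1 := by
        have hs : k ∣ k * d - k * j := Nat.dvd_sub ⟨d, rfl⟩ ⟨j, rfl⟩
        rw [h1'] at hs
        simpa using hs
      have := Nat.le_of_dvd one_pos h2'
      omega
  · -- use {1, n}
    refine ⟨{1, n}, pair_min_of n k 1 n (by omega) (by omega) le_rfl (by omega) (by omega) ?_⟩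
    rintro hf
    obtain ⟨a, j, ha, hj, hle, hmem⟩ := vdwFace_elim hf
    obtain ⟨i1, hi1, h1⟩ := hmem 1 (by simp)
    obtain ⟨i2, hi2, h2⟩ := hmem n (by simp)
    have ha1 : a = 1 := by omega
    subst ha1
    have hki2 : k ≤ i2 := by
      by_contra hc
      have hlt : i2 * j < k * j :=
        mul_lt_mul_of_pos_right (show i2 < k by omega) (show (0:ℕ) < j by omega)
      omega
    have hi2k : i2 = k := le_antisymm hi2 hki2
    rw [hi2k] at h2
    exact hdvd ⟨j, by omega⟩

lemma pair_face (n k a j i1 i2 u v : ℕ) (ha : 1 ≤ a) (hj : 1 ≤ j) (hn : a + k * j ≤ n)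
    (h1 : i1 ≤ k) (h2 : i2 ≤ k) (e1 : u = a + i1 * j) (e2 : v = a + i2 * j) :
    vdwFace n k {u, v} := by
  refine vdwFace_of n k a j ha hj hn _ ?_
  intro x hx
  simp only [Finset.mem_insert, Finset.mem_singleton] at hx
  rcases hx with rfl | rfl
  · exact ⟨i1, h1, e1⟩
  · exact ⟨i2, h2, e2⟩

lemma triple_min_of (n k u v w : ℕ) (hu : 1 ≤ u) (huv : u < v) (hvw : v < w) (hwn : w ≤ n)
    (hnf : ¬ vdwFace n k {u, v, w}) (f1 : vdwFace n k {v, w}) (f2 : vdwFace n k {u, w})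
    (f3 : vdwFace n k {u, v}) :
    vdwMinNonFace n k {u, v, w} ∧ ({u, v, w} : Finset ℕ).card = 3 := by
  constructor
  · refine minNonFace_of n k _ ?_ hnf ?_
    · intro x hx
      simp only [Finset.mem_insert, Finset.mem_singleton] at hx
      simp only [Finset.mem_Icc]
      rcases hx with rfl | rfl | rfl <;> omega
    · intro x hx
      simp only [Finset.mem_insert, Finset.mem_singleton] at hx
      rcases hx with rfl | rfl | rfl
      · refine vdwFace_mono (show ({x, v, w} : Finset ℕ).erase x ⊆ {v, w} from ?_) f1
        intro y hy
        simp only [Finset.mem_erase, Finset.mem_insert, Finset.mem_singleton] at hy ⊢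
        tauto
      · refine vdwFace_mono (show ({u, x, w} : Finset ℕ).erase x ⊆ {u, w} from ?_) f2
        intro y hy
        simp only [Finset.mem_erase, Finset.mem_insert, Finset.mem_singleton] at hy ⊢
        tauto
      · refine vdwFace_mono (show ({u, v, x} : Finset ℕ).erase x ⊆ {u, v} from ?_) f3
        intro y hy
        simp only [Finset.mem_erase, Finset.mem_insert, Finset.mem_singleton] at hy ⊢
        tauto
  · exact Finset.card_eq_three.mpr ⟨u, v, w, by omega, by omega, by omega, rfl⟩

lemma triple_odd (n k t : ℕ) (hk : k = 2 * t + 1) (ht : 1 ≤ t) (hkn : 2 * k < n) :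
    ∃ T : Finset ℕ, vdwMinNonFace n k T ∧ T.card = 3 := by
  refine ⟨{n - 2 * k, n - 2 * k + 1, n - k + 1}, triple_min_of n k _ _ _ (by omega) (by omega)
    (by omega) (by omega) ?_ ?_ ?_ ?_⟩
  · rintro hf
    obtain ⟨a, j, ha, hj, hle, hmem⟩ := vdwFace_elim hf
    obtain ⟨p, hp, e1⟩ := hmem (n - 2 * k) (by simp)
    obtain ⟨q, hq, e2⟩ := hmem (n - 2 * k + 1) (by simp)
    obtain ⟨r, hr, e3⟩ := hmem (n - k + 1) (by simp)
    have hd : j ∣ q * j - p * j := Nat.dvd_sub (dvd_mul_left j q) (dvd_mul_left j p)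
    have he : q * j - p * j = 1 := by omega
    rw [he] at hd
    have hj1 : j = 1 := Nat.dvd_one.mp hd
    subst hj1
    omega
  · exact pair_face n k (n - 2 * k + 1) 1 0 k _ _ (by omega) le_rfl (by omega) (by omega)
      le_rfl (by omega) (by omega)
  · exact pair_face n k (n - 2 * k) 2 0 (t + 1) _ _ (by omega) (by omega) (by omega) (by omega)
      (by omega) (by omega) (by omega)
  · exact pair_face n k (n - 2 * k) 1 0 1 _ _ (by omega) le_rfl (by omega) (by omega)
      (by omega) (by omega) (by omega)

lemma triple_even_gen (n k s m : ℕ) (hk : 2 ≤ k) (hn : 2 * k + 1 ≤ n) (hs1 : 1 ≤ s)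
    (hsk : s ≤ k) (hmk : m ≤ k) (hkm : k < 2 * m) (hms : 2 * m ≤ s + k)
    (hg : Nat.gcd s (2 * m) = 1) :
    ∃ T : Finset ℕ, vdwMinNonFace n k T ∧ T.card = 3 := by
  refine ⟨{1, s + 1, 2 * m + 1}, triple_min_of n k _ _ _ le_rfl (by omega) (by omega) (by omega)
    ?_ ?_ ?_ ?_⟩
  · rintro hf
    obtain ⟨a, j, ha, hj, hle, hmem⟩ := vdwFace_elim hf
    obtain ⟨p, hp, e1⟩ := hmem 1 (by simp)
    obtain ⟨q, hq, e2⟩ := hmem (s + 1) (by simp)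
    obtain ⟨r, hr, e3⟩ := hmem (2 * m + 1) (by simp)
    have ha1 : a = 1 := by omega
    subst ha1
    have hds : j ∣ s := by
      have : j ∣ q * j := dvd_mul_left j q
      have hqe : q * j = s := by omega
      rwa [hqe] at this
    have hdm : j ∣ 2 * m := by
      have : j ∣ r * j := dvd_mul_left j r
      have hre : r * j = 2 * m := by omega
      rwa [hre] at this
    have hj1 : j = 1 := Nat.dvd_one.mp (hg ▸ Nat.dvd_gcd hds hdm)
    subst hj1
    omega
  · exact pair_face n k (2 * m + 1 - k) 1 (s + k - 2 * m) k _ _ (by omega) le_rfl (by omega)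
      (by omega) le_rfl (by omega) (by omega)
  · exact pair_face n k 1 2 0 m _ _ le_rfl (by omega) (by omega) (by omega) hmk (by omega)
      (by omega)
  · exact pair_face n k 1 1 0 s _ _ le_rfl le_rfl (by omega) (by omega) hsk (by omega) (by omega)

lemma triple_k2 (n : ℕ) (hn : 7 ≤ n) :
    ∃ T : Finset ℕ, vdwMinNonFace n 2 T ∧ T.card = 3 := by
  refine ⟨{1, 2, 4}, triple_min_of n 2 _ _ _ le_rfl (by omega) (by omega) (by omega)
    ?_ ?_ ?_ ?_⟩
  · rintro hf
    obtain ⟨a, j, ha, hj, hle, hmem⟩ := vdwFace_elim hf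
    obtain ⟨p, hp, e1⟩ := hmem 1 (by simp)
    obtain ⟨q, hq, e2⟩ := hmem 2 (by simp)
    obtain ⟨r, hr, e3⟩ := hmem 4 (by simp)
    have ha1 : a = 1 := by omega
    subst ha1
    have hj1 : j = 1 := Nat.dvd_one.mp (by
      have : j ∣ q * j := dvd_mul_left j q
      have hqe : q * j = 1 := by omega
      rwa [hqe] at this)
    subst hj1
    omega
  · exact pair_face n 2 2 1 0 2 _ _ (by omega) le_rfl (by omega) (by omega) le_rfl (by omega)
      (by omega)
  · exact pair_face n 2 1 3 0 1 _ _ le_rfl (by omega) (by omega) (by omega) (by omega)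
      (by omega) (by omega)
  · exact pair_face n 2 1 1 0 1 _ _ le_rfl le_rfl (by omega) (by omega) (by omega) (by omega)
      (by omega)

lemma triple_k4 (n : ℕ) (hn : 9 ≤ n) :
    ∃ T : Finset ℕ, vdwMinNonFace n 4 T ∧ T.card = 3 := by
  rcases le_or_gt 13 n with h13 | h13
  · -- {1, 2, 10}
    refine ⟨{1, 2, 10}, triple_min_of n 4 _ _ _ le_rfl (by omega) (by omega) (by omega)
      ?_ ?_ ?_ ?_⟩
    · rintro hf
      obtain ⟨a, j, ha, hj, hle, hmem⟩ := vdwFace_elim hf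
      obtain ⟨p, hp, e1⟩ := hmem 1 (by simp)
      obtain ⟨q, hq, e2⟩ := hmem 2 (by simp)
      obtain ⟨r, hr, e3⟩ := hmem 10 (by simp)
      have ha1 : a = 1 := by omega
      subst ha1
      have hj1 : j = 1 := Nat.dvd_one.mp (by
        have : j ∣ q * j := dvd_mul_left j q
        have hqe : q * j = 1 := by omega
        rwa [hqe] at this)
      subst hj1
      omega
    · exact pair_face n 4 2 2 0 4 _ _ (by omega) (by omega) (by omega) (by omega) le_rfl
        (by omega) (by omega)
    · exact pair_face n 4 1 3 0 3 _ _ le_rfl (by omega) (by omega) (by omega) (by omega)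
        (by omega) (by omega)
    · exact pair_face n 4 1 1 0 1 _ _ le_rfl le_rfl (by omega) (by omega) (by omega) (by omega)
        (by omega)
  · -- {1, 4, 7}, 9 ≤ n ≤ 12
    refine ⟨{1, 4, 7}, triple_min_of n 4 _ _ _ le_rfl (by omega) (by omega) (by omega)
      ?_ ?_ ?_ ?_⟩
    · rintro hf
      obtain ⟨a, j, ha, hj, hle, hmem⟩ := vdwFace_elim hf
      obtain ⟨p, hp, e1⟩ := hmem 1 (by simp)
      obtain ⟨q, hq, e2⟩ := hmem 4 (by simp)
      obtain ⟨r, hr, e3⟩ := hmem 7 (by simp)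
      have ha1 : a = 1 := by omega
      subst ha1
      have hj2 : j ≤ 2 := by omega
      interval_cases j <;> omega
    · exact pair_face n 4 3 1 1 4 _ _ (by omega) le_rfl (by omega) (by omega) le_rfl (by omega)
        (by omega)
    · exact pair_face n 4 1 2 0 3 _ _ le_rfl (by omega) (by omega) (by omega) (by omega)
        (by omega) (by omega)
    · exact pair_face n 4 1 1 0 3 _ _ le_rfl le_rfl (by omega) (by omega) (by omega) (by omega)
        (by omega)

lemma gcd_eq_one_of_prime_sub {a b p : ℕ} (hp : p.Prime) (hab : a ≤ b) (hd : b - a = p)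
    (h : ¬ p ∣ a) : Nat.gcd a b = 1 := by
  have h1 : Nat.gcd a b ∣ p := by
    have := Nat.dvd_sub (Nat.gcd_dvd_right a b) (Nat.gcd_dvd_left a b)
    rwa [hd] at this
  rcases (Nat.Prime.eq_one_or_self_of_dvd hp _ h1) with h2 | h2
  · exact h2
  · exact absurd (h2 ▸ Nat.gcd_dvd_left a b) h

/-- For `n ≥ 7` and `1 < k < n/2`, the complex `vdW(n,k)` has a minimal non-face of
cardinality `2` and a minimal non-face of cardinality `3` (so its Stanley–Reisner
ideal has minimal generators of degree two and of degree three). -/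
theorem vdW_minimal_nonfaces_deg_two_and_three (n k : ℕ) (hn : 7 ≤ n) (hk : 1 < k)
    (hkn : 2 * k < n) :
    (∃ S : Finset ℕ, vdwMinNonFace n k S ∧ S.card = 2) ∧
    (∃ T : Finset ℕ, vdwMinNonFace n k T ∧ T.card = 3) := by
  refine ⟨pair_deg2 n k hn hk hkn, ?_⟩
  rcases Nat.even_or_odd k with ⟨u, hu⟩ | ⟨t, ht⟩
  · rcases (show k = 2 ∨ k = 4 ∨ 6 ≤ k by omega) with rfl | rfl | h6
    · exact triple_k2 n hn
    · exact triple_k4 n (by omega)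
    · by_cases h3 : 3 ∣ k - 1
      · by_cases h5 : 5 ∣ k - 3
        · refine triple_even_gen n k (k - 1) (u + 2) (by omega) (by omega) (by omega) (by omega)
            (by omega) (by omega) (by omega) ?_
          have h2m : 2 * (u + 2) = k + 4 := by omega
          rw [h2m]
          refine gcd_eq_one_of_prime_sub (p := 5) (by norm_num) (by omega) (by omega) ?_
          intro h5'
          have : (5 : ℕ) ∣ 2 := by
            have := Nat.dvd_sub h5' h5
            have he : k - 1 - (k - 3) = 2 := by omega
            rwa [he] at this
          omega
        · refine triple_even_gen n k (k - 3) (u + 1) (by omega) (by omega) (by omega) (by omega)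
            (by omega) (by omega) (by omega) ?_
          have h2m : 2 * (u + 1) = k + 2 := by omega
          rw [h2m]
          exact gcd_eq_one_of_prime_sub (by norm_num) (by omega) (by omega) h5
      · refine triple_even_gen n k (k - 1) (u + 1) (by omega) (by omega) (by omega) (by omega)
          (by omega) (by omega) (by omega) ?_
        have h2m : 2 * (u + 1) = k + 2 := by omega
        rw [h2m]
        exact gcd_eq_one_of_prime_sub (by norm_num) (by omega) (by omega) h3
  · exact triple_odd n k t (by omega) (by omega) hkn
end
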